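/- A (d-1)-dimensional simplicial complex K that is (S_r) over a field k for some r ≥ 2 is pure, i.e., every facet of K has dimension d - 1. -/

import Mathlib

noncomputable section

/-! ## Singular homology machinery -/

namespace SimplexCategory

/-- The old Mathlib (Dec 2024) topological simplex, restored: `ℝ≥0`-valued barycentric
coordinates summing to `1`. -/
def toTopObj (x : SimplexCategory) : Set (Fin (x.len + 1) → NNReal) :=
  {f | ∑ i, f i = 1}

/-- The old Mathlib (Dec 2024) map of topological simplices induced by a morphism. -/
def toTopMap {x y : SimplexCategory} (f : x ⟶ y) (g : x.toTopObj) : y.toTopObj :=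
  ⟨fun i => ∑ j ∈ Finset.univ.filter (fun j => f.toOrderHom j = i), (g : Fin (x.len + 1) → NNReal) j, by
    change (∑ i, ∑ j ∈ Finset.univ.filter (fun j => f.toOrderHom j = i), (g : Fin (x.len + 1) → NNReal) j) = 1
    rw [Finset.sum_fiberwise]
    exact g.2⟩

theorem continuous_toTopMap {x y : SimplexCategory} (f : x ⟶ y) : Continuous (toTopMap f) :=
  Continuous.subtype_mk (continuous_pi fun _ => continuous_finset_sum _ fun j _ =>
    (continuous_apply j).comp continuous_subtype_val) _

end SimplexCategory

/-- The topological standard `n`-simplex. -/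
abbrev TopSimplex (n : ℕ) : Type := (SimplexCategory.mk n).toTopObj

/-- The `i`-th face inclusion of topological simplices, as a continuous map. -/
def faceIncl {n : ℕ} (i : Fin (n + 2)) : C(TopSimplex n, TopSimplex (n + 1)) :=
  ⟨SimplexCategory.toTopMap (SimplexCategory.δ i), SimplexCategory.continuous_toTopMap _⟩

/-- Singular `n`-chains of `X` with coefficients in `k`:
the free `k`-module on continuous maps from the standard `n`-simplex. -/
abbrev SChain (k : Type) [Field k] (X : Type*) [TopologicalSpace X] (n : ℕ) :=
  C(TopSimplex n, X) →₀ k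

variable (k : Type) [Field k]

/-- The singular boundary map `C_{n+1}(X) → C_n(X)`. -/
def sBoundary (X : Type*) [TopologicalSpace X] (n : ℕ) :
    SChain k X (n + 1) →ₗ[k] SChain k X n :=
  Finsupp.lsum k fun σ => ∑ i : Fin (n + 2),
    ((-1 : k) ^ (i : ℕ)) • Finsupp.lsingle (σ.comp (faceIncl i))

/-- The chain map induced by a continuous map. -/
def chainMap {A X : Type*} [TopologicalSpace A] [TopologicalSpace X] (f : C(A, X)) (n : ℕ) :
    SChain k A n →ₗ[k] SChain k X n :=
  Finsupp.lmapDomain k k fun σ => f.comp σ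

lemma chainMap_comm {A X : Type*} [TopologicalSpace A] [TopologicalSpace X] (f : C(A, X))
    (n : ℕ) :
    (sBoundary k X n).comp (chainMap k f (n + 1)) = (chainMap k f n).comp (sBoundary k A n) := by
  apply Finsupp.lhom_ext
  intro σ b
  simp only [LinearMap.coe_comp, Function.comp_apply, chainMap, Finsupp.lmapDomain_apply,
    Finsupp.mapDomain_single, sBoundary, Finsupp.lsum_single, LinearMap.coe_sum,
    Finset.sum_apply, LinearMap.smul_apply, Finsupp.lsingle_apply, map_sum,
    Finsupp.mapDomain_smul, ContinuousMap.comp_assoc]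

/-- Chains of `X` supported on a subspace `A ⊆ X`
(the image of the chains of `A` under the inclusion). -/
def subChains (X : Type*) [TopologicalSpace X] (A : Set X) (n : ℕ) :
    Submodule k (SChain k X n) :=
  LinearMap.range (chainMap k ⟨(Subtype.val : A → X), continuous_subtype_val⟩ n)

/-- Relative singular `n`-chains of the pair `(X, A)`. -/
abbrev RelChain (X : Type*) [TopologicalSpace X] (A : Set X) (n : ℕ) :=
  SChain k X n ⧸ subChains k X A n

lemma subChains_le (X : Type*) [TopologicalSpace X] (A : Set X) (n : ℕ) :
    subChains k X A (n + 1) ≤ (subChains k X A n).comap (sBoundary k X n) := by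
  rintro x ⟨y, rfl⟩
  exact ⟨sBoundary k A n y, (LinearMap.congr_fun (chainMap_comm k _ n) y).symm⟩

/-- The boundary map on relative singular chains. -/
def relBoundary (X : Type*) [TopologicalSpace X] (A : Set X) (n : ℕ) :
    RelChain k X A (n + 1) →ₗ[k] RelChain k X A n :=
  Submodule.mapQ _ _ (sBoundary k X n) (subChains_le k X A n)

/-- Relative singular cycles. -/
def relCycles (X : Type*) [TopologicalSpace X] (A : Set X) :
    (n : ℕ) → Submodule k (RelChain k X A n)
  | 0 => ⊤
  | n + 1 => LinearMap.ker (relBoundary k X A n)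

/-- Relative singular homology `H_n(X, A; k)`: cycles modulo boundaries. -/
def RelHomology (X : Type*) [TopologicalSpace X] (A : Set X) (n : ℕ) : Type _ :=
  ↥((relCycles k X A n).map (LinearMap.range (relBoundary k X A n)).mkQ)

/-- Local homology `H_n(X, X - p; k)`. -/
def LocalHomology (X : Type*) [TopologicalSpace X] (p : X) (n : ℕ) : Type _ :=
  RelHomology k X ({p}ᶜ) n

/-- Local homology with integer index (trivial in negative degrees). -/
def LocalHomologyZ (X : Type*) [TopologicalSpace X] (p : X) : ℤ → Type _
  | .ofNat n => LocalHomology k X p n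
  | .negSucc _ => PUnit

instance (X : Type*) [TopologicalSpace X] (p : X) (n : ℕ) :
    AddCommGroup (LocalHomology k X p n) := by
  unfold LocalHomology RelHomology; infer_instance

instance (X : Type*) [TopologicalSpace X] (p : X) (n : ℕ) :
    Module k (LocalHomology k X p n) := by
  unfold LocalHomology RelHomology; infer_instance

instance (X : Type*) [TopologicalSpace X] (p : X) (j : ℤ) :
    AddCommGroup (LocalHomologyZ k X p j) := by
  unfold LocalHomologyZ; cases j <;> infer_instance

instance (X : Type*) [TopologicalSpace X] (p : X) (j : ℤ) :
    Module k (LocalHomologyZ k X p j) := by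
  unfold LocalHomologyZ; cases j <;> infer_instance

/-- The augmentation map on singular `0`-chains. -/
def sAugment (X : Type*) [TopologicalSpace X] : SChain k X 0 →ₗ[k] k :=
  Finsupp.lsum k fun _ => LinearMap.id

/-- Reduced singular cycles (using the augmented chain complex). -/
def redCycles (X : Type*) [TopologicalSpace X] : (n : ℕ) → Submodule k (SChain k X n)
  | 0 => LinearMap.ker (sAugment k X)
  | n + 1 => LinearMap.ker (sBoundary k X n)

/-- Reduced singular homology `H̃_n(X; k)`. -/
def RedHomology (X : Type*) [TopologicalSpace X] (n : ℕ) : Type _ :=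
  ↥((redCycles k X n).map (LinearMap.range (sBoundary k X n)).mkQ)

/-! ## Abstract simplicial complexes and their geometric realization -/

/-- A (possibly empty) abstract simplicial complex on the vertex set `V`,
whose faces include the empty set whenever there is any face. -/
structure ASC (V : Type) where
  faces : Set (Finset V)
  down_closed : ∀ {s t : Finset V}, s ∈ faces → t ⊆ s → t ∈ faces

/-- The dimension of a face: its cardinality minus one. -/
def dimF {V : Type} (s : Finset V) : ℤ := (s.card : ℤ) - 1

namespace ASC

variable {V : Type}

/-- The link of a face `σ`. -/
def link [DecidableEq V] (K : ASC V) (σ : Finset V) : ASC V where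
  faces := {τ | τ ∩ σ = ∅ ∧ τ ∪ σ ∈ K.faces}
  down_closed := by
    rintro s t ⟨hd, hu⟩ hts
    refine ⟨Finset.subset_empty.mp ?_, K.down_closed hu (Finset.union_subset_union hts Finset.Subset.rfl)⟩
    rw [← hd]
    exact Finset.inter_subset_inter hts Finset.Subset.rfl

/-- A facet: an inclusion-maximal face. -/
def IsFacet (K : ASC V) (s : Finset V) : Prop :=
  s ∈ K.faces ∧ ∀ t ∈ K.faces, s ⊆ t → s = t

/-- The subcomplex of `K` generated by a given family of faces of `K`. -/
def gen (K : ASC V) (F : Set (Finset V)) : ASC V where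
  faces := {t | ∃ s ∈ F ∩ K.faces, t ⊆ s}
  down_closed := by rintro s t ⟨u, hu, hsu⟩ hts; exact ⟨u, hu, hts.trans hsu⟩

/-- `K^⟨m⟩`: the subcomplex generated by all facets of dimension at least `m`. -/
def aboveSkel (K : ASC V) (m : ℤ) : ASC V :=
  K.gen {s | K.IsFacet s ∧ m ≤ dimF s}

/-- `K^[m]`: the pure `m`-skeleton, generated by all `m`-dimensional faces. -/
def pureSkel (K : ASC V) (m : ℤ) : ASC V :=
  K.gen {s | dimF s = m}

/-- The `m`-skeleton: all faces of dimension at most `m`. -/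
def skel (K : ASC V) (m : ℤ) : ASC V where
  faces := {s | s ∈ K.faces ∧ dimF s ≤ m}
  down_closed := by
    rintro s t ⟨hs, hds⟩ hts
    refine ⟨K.down_closed hs hts, le_trans ?_ hds⟩
    simp only [dimF, sub_le_sub_iff_right, Nat.cast_le]
    exact Finset.card_le_card hts

/-- `K` has dimension `n`. -/
def hasDim (K : ASC V) (n : ℤ) : Prop :=
  (∃ s ∈ K.faces, dimF s = n) ∧ ∀ s ∈ K.faces, dimF s ≤ n

/-- The geometric realization of `K`, as a subset of `V → ℝ`. -/
def realizSet (K : ASC V) [Fintype V] : Set (V → ℝ) :=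
  {f | (∀ v, 0 ≤ f v) ∧ (∑ v, f v) = 1 ∧ ∃ s ∈ K.faces, ∀ v, f v ≠ 0 → v ∈ s}

/-- The geometric realization of `K`, as a topological space. -/
abbrev space (K : ASC V) [Fintype V] : Type _ := ↥(K.realizSet)

/-- The set of points of `|K|` lying in the realization of a subcomplex `L`. -/
def subSpace (K : ASC V) [Fintype V] (L : ASC V) : Set K.space :=
  {p | ∃ s ∈ L.faces, ∀ v, (p : V → ℝ) v ≠ 0 → v ∈ s}

/-- `p` lies in the (relative) interior of the face `σ`, i.e. the support of `p` is
exactly `σ`. -/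
def inInterior (K : ASC V) [Fintype V] (σ : Finset V) (p : K.space) : Prop :=
  ∀ v, (p : V → ℝ) v ≠ 0 ↔ v ∈ σ

end ASC

/-! ## Simplicial homology -/

/-- The `n`-dimensional faces of `K` (faces of cardinality `n+1`). -/
def FacesDim {V : Type} (K : ASC V) (n : ℕ) : Type _ :=
  {s : Finset V // s ∈ K.faces ∧ s.card = n + 1}

/-- Simplicial `n`-chains. -/
abbrev SimpChain {V : Type} (K : ASC V) (n : ℕ) : Type _ := FacesDim K n →₀ k

/-- The `i`-th vertex of a face of cardinality `n` (in the vertex order). -/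
def faceVertex {V : Type} [LinearOrder V] {n : ℕ} (s : Finset V) (hs : s.card = n)
    (i : Fin n) : V :=
  (s.sort (· ≤ ·))[(i : ℕ)]'(by rw [Finset.length_sort, hs]; exact i.isLt)

lemma faceVertex_mem {V : Type} [LinearOrder V] {n : ℕ} (s : Finset V) (hs : s.card = n)
    (i : Fin n) : faceVertex s hs i ∈ s :=
  (Finset.mem_sort _).mp (List.getElem_mem _)

/-- The simplicial boundary map. -/
def simpBoundary {V : Type} [LinearOrder V] (K : ASC V) (n : ℕ) :
    SimpChain k K (n + 1) →ₗ[k] SimpChain k K n :=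
  Finsupp.lsum k fun s => ∑ i : Fin (n + 2),
    ((-1 : k) ^ (i : ℕ)) • Finsupp.lsingle
      ⟨s.1.erase (faceVertex s.1 s.2.2 i),
        K.down_closed s.2.1 (Finset.erase_subset _ _), by
          rw [Finset.card_erase_of_mem (faceVertex_mem s.1 s.2.2 i), s.2.2]; omega⟩

/-- The simplicial augmentation map. -/
def simpAugment {V : Type} (K : ASC V) : SimpChain k K 0 →ₗ[k] k :=
  Finsupp.lsum k fun _ => LinearMap.id

/-- Reduced simplicial cycles (augmented chain complex). -/
def simpRedCycles {V : Type} [LinearOrder V] (K : ASC V) :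
    (n : ℕ) → Submodule k (SimpChain k K n)
  | 0 => (LinearMap.ker (simpAugment k K) : Submodule k (SimpChain k K 0))
  | n + 1 => LinearMap.ker (simpBoundary k K n)

/-- Reduced simplicial homology `H̃_n(K; k)` in degree `n : ℕ`. -/
def SimpRedHomology {V : Type} [LinearOrder V] (K : ASC V) (n : ℕ) : Type _ :=
  ↥((simpRedCycles k K n).map (LinearMap.range (simpBoundary k K n)).mkQ)

instance {V : Type} [LinearOrder V] (K : ASC V) (n : ℕ) :
    AddCommGroup (SimpRedHomology k K n) := by unfold SimpRedHomology; infer_instance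

instance {V : Type} [LinearOrder V] (K : ASC V) (n : ℕ) :
    Module k (SimpRedHomology k K n) := by unfold SimpRedHomology; infer_instance

/-- The cokernel of the simplicial augmentation: reduced homology in degree `-1`. -/
def augCoker {V : Type} (K : ASC V) : Type _ :=
  k ⧸ LinearMap.range (simpAugment k K)

instance {V : Type} (K : ASC V) : AddCommGroup (augCoker k K) := by
  unfold augCoker; infer_instance

instance {V : Type} (K : ASC V) : Module k (augCoker k K) := by
  unfold augCoker; infer_instance

/-- Reduced simplicial homology with integer index: in degree `-1` it is the cokernel of the
augmentation, and it is trivial in degrees below `-1`. -/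
def SimpRedHomologyZ {V : Type} [LinearOrder V] (K : ASC V) : ℤ → Type _
  | .ofNat n => SimpRedHomology k K n
  | .negSucc 0 => augCoker k K
  | .negSucc (_ + 1) => PUnit

instance {V : Type} [LinearOrder V] (K : ASC V) (j : ℤ) :
    AddCommGroup (SimpRedHomologyZ k K j) := by
  unfold SimpRedHomologyZ
  match j with
  | .ofNat n => infer_instance
  | .negSucc 0 => infer_instance
  | .negSucc (_ + 1) => infer_instance

instance {V : Type} [LinearOrder V] (K : ASC V) (j : ℤ) :
    Module k (SimpRedHomologyZ k K j) := by
  unfold SimpRedHomologyZ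
  match j with
  | .ofNat n => infer_instance
  | .negSucc 0 => infer_instance
  | .negSucc (_ + 1) => infer_instance

/-! ## Serre conditions -/

/-- Serre's condition `(S_r)` over `k` for a `(d-1)`-dimensional complex `K`. -/
def IsSerre {V : Type} [LinearOrder V] (K : ASC V) (d r : ℕ) : Prop :=
  ∀ σ ∈ K.faces, ∀ i : ℕ,
    (i : ℤ) < min ((r : ℤ) - 1) ((d : ℤ) - dimF σ - 2) →
      Subsingleton (SimpRedHomology k (K.link σ) i)

/-- Sequentially `(S_r)`: every pure `m`-skeleton (an `m`-dimensional complex) is `(S_r)`. -/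
def SeqSerre {V : Type} [LinearOrder V] (K : ASC V) (r : ℕ) : Prop :=
  ∀ m : ℕ, IsSerre k (K.pureSkel (m : ℤ)) (m + 1) r

/-! ## Topological notions -/

/-- The open unit ball in `ℝ^n`. -/
def openBall (n : ℕ) : Set (EuclideanSpace ℝ (Fin n)) := Metric.ball 0 1

/-- `p` has a neighborhood homeomorphic to an open `j`-dimensional ball. -/
def HasBallNbhd {X : Type*} [TopologicalSpace X] (p : X) (j : ℕ) : Prop :=
  ∃ U ∈ nhds p, Nonempty (↥U ≃ₜ ↥(openBall j))

/-- `D_j(X; k)`: the points with nonvanishing `j`-th local homology. -/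
def Dset (X : Type*) [TopologicalSpace X] (j : ℕ) : Set X :=
  {p | Nontrivial (LocalHomology k X p j)}

/-- `X^⟨m⟩`: the closure of the union of the `D_j(X; k)` for `j ≥ m`. -/
def aboveSet (X : Type*) [TopologicalSpace X] (m : ℕ) : Set X :=
  closure (⋃ j : ℕ, ⋃ _ : m ≤ j, Dset k X j)

/-- The dimension of a subset `S` of a space is at most `ℓ`: `S` contains no open ball of
dimension greater than `ℓ`.  (The empty set has negative dimension.) -/
def SetDimLE {X : Type*} [TopologicalSpace X] (S : Set X) (ℓ : ℤ) : Prop :=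
  ∀ n : ℕ, (∃ B : Set X, B ⊆ S ∧ Nonempty (↥B ≃ₜ ↥(openBall n))) → (n : ℤ) ≤ ℓ

/-!
Condition `(S_2)` says that the link of every face of codimension at least two has vanishing
`H̃₀`, i.e. a connected 1-skeleton: for vertices `u`, `v` the `0`-cycle `u - v` must be a boundary,
while the indicator of the component of `u` is a cocycle taking the value `1` on it.

Complexes whose links are connected in this sense are pure, by induction on the dimension. The link
of a vertex lying in a top-dimensional face inherits both hypotheses one dimension lower. Using
this, membership in a top-dimensional face spreads along the edges of the connected 1-skeleton,
so every vertex `v` lies in one; and for a facet `s ∋ v`, `s \ {v}` is a facet of the link of `v`.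
-/

namespace ASC

variable {V : Type}

theorem ext {K L : ASC V} (h : K.faces = L.faces) : K = L := by
  cases K; cases L; cases h; rfl

lemma dimF_eq_sub_one_iff {s : Finset V} {d : ℕ} : dimF s = (d : ℤ) - 1 ↔ s.card = d := by
  simp [dimF]

lemma hasDim_sub_one_iff {K : ASC V} {d : ℕ} :
    K.hasDim ((d : ℤ) - 1) ↔ (∃ s ∈ K.faces, s.card = d) ∧ ∀ s ∈ K.faces, s.card ≤ d := by
  simp [hasDim, dimF]

def Adj (K : ASC V) (a b : V) : Prop :=
  ∃ e ∈ K.faces, a ∈ e ∧ b ∈ e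

def Connected (K : ASC V) : Prop :=
  ∀ u v : V, {u} ∈ K.faces → {v} ∈ K.faces → Relation.ReflTransGen K.Adj u v

section DecidableEq

variable [DecidableEq V] {K : ASC V}

lemma link_empty (K : ASC V) : K.link ∅ = K :=
  ext <| Set.ext fun τ => by simp [link]

lemma link_link {σ τ : Finset V} (h : τ ∩ σ = ∅) : (K.link σ).link τ = K.link (σ ∪ τ) := by
  refine ext <| Set.ext fun ρ => ?_
  simp only [link, Set.mem_ofPred_eq, Finset.union_inter_distrib_right, h, Finset.union_empty,
    Finset.inter_union_distrib_left, Finset.union_eq_empty]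
  rw [Finset.union_assoc, Finset.union_comm τ σ]
  tauto

lemma mem_link_singleton {y : V} {τ : Finset V} :
    τ ∈ (K.link {y}).faces ↔ y ∉ τ ∧ insert y τ ∈ K.faces := by
  simp [link, Finset.eq_empty_iff_forall_notMem, Finset.union_singleton]

/-- As in `IsSerre`, `d` is one more than the dimension: `σ.card + 2 ≤ d` says that `σ` has
codimension at least two. -/
def LinksConnected (K : ASC V) (d : ℕ) : Prop :=
  ∀ σ ∈ K.faces, σ.card + 2 ≤ d → (K.link σ).Connected

lemma LinksConnected.connected {d : ℕ} (hL : K.LinksConnected d) (hd : 2 ≤ d)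
    (hK : ∅ ∈ K.faces) : K.Connected := by
  simpa [link_empty] using hL ∅ hK (by simpa using hd)

lemma LinksConnected.link_singleton {d : ℕ} (hL : K.LinksConnected (d + 1)) (y : V) :
    (K.link {y}).LinksConnected d := by
  intro σ hσ hcard
  obtain ⟨hyσ, hσ⟩ := mem_link_singleton.1 hσ
  rw [link_link (by simpa [Finset.eq_empty_iff_forall_notMem] using hyσ),
    ← Finset.insert_eq]
  exact hL _ hσ (by rw [Finset.card_insert_of_notMem hyσ]; omega)

lemma hasDim_link_singleton {d : ℕ} (hK : K.hasDim (((d + 1 : ℕ) : ℤ) - 1)) {G : Finset V}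
    {y : V} (hG : G ∈ K.faces) (hGc : G.card = d + 1) (hyG : y ∈ G) :
    (K.link {y}).hasDim ((d : ℤ) - 1) := by
  rw [hasDim_sub_one_iff] at hK ⊢
  refine ⟨⟨G.erase y, mem_link_singleton.2 ⟨Finset.notMem_erase y G, ?_⟩, ?_⟩, fun τ hτ => ?_⟩
  · rwa [Finset.insert_erase hyG]
  · rw [Finset.card_erase_of_mem hyG, hGc]; rfl
  obtain ⟨hyτ, hτ⟩ := mem_link_singleton.1 hτ
  have := hK.2 _ hτ
  rw [Finset.card_insert_of_notMem hyτ] at this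
  omega

lemma IsFacet.link_singleton_erase {s : Finset V} {v : V} (hs : K.IsFacet s) (hv : v ∈ s) :
    (K.link {v}).IsFacet (s.erase v) := by
  refine ⟨mem_link_singleton.2 ⟨Finset.notMem_erase v s, ?_⟩, fun t ht hst => ?_⟩
  · rw [Finset.insert_erase hv]; exact hs.1
  obtain ⟨hvt, ht⟩ := mem_link_singleton.1 ht
  have hs_eq : s = insert v t :=
    hs.2 _ ht (by rw [← Finset.insert_erase hv]; exact Finset.insert_subset_insert v hst)
  rw [hs_eq, Finset.erase_insert hvt]

theorem exists_mem_face_card_eq :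
    ∀ {d : ℕ} {K : ASC V}, K.hasDim ((d : ℤ) - 1) → K.LinksConnected d →
      ∀ {u : V}, {u} ∈ K.faces → ∃ G ∈ K.faces, G.card = d ∧ u ∈ G
  | 0, K, hK, _, u, hu => by
    simpa using (hasDim_sub_one_iff.1 hK).2 _ hu
  | 1, _, _, _, u, hu => ⟨{u}, hu, Finset.card_singleton u, Finset.mem_singleton_self u⟩
  | d + 2, K, hK, hL, u, hu => by
    obtain ⟨G₀, hG₀, hG₀c⟩ := (hasDim_sub_one_iff.1 hK).1
    obtain ⟨g, hg⟩ : G₀.Nonempty := Finset.card_pos.1 (by omega)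
    -- Membership in a top-dimensional face spreads along edges: if `y ∈ G`, then `x` is a vertex
    -- of the `(d-1)`-dimensional complex `link {y}`, so `x ∈ G'` with `insert y G'` a face.
    have spread : ∀ x y, K.Adj x y → (∃ G ∈ K.faces, G.card = d + 2 ∧ y ∈ G) →
        ∃ G ∈ K.faces, G.card = d + 2 ∧ x ∈ G := by
      rintro x y ⟨e, he, hxe, hye⟩ ⟨G, hG, hGc, hyG⟩
      by_cases hxy : x = y
      · exact ⟨G, hG, hGc, hxy ▸ hyG⟩
      have hx : {x} ∈ (K.link {y}).faces := mem_link_singleton.2 ⟨by simpa [eq_comm] using hxy,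
        K.down_closed he (by simp [Finset.insert_subset_iff, hxe, hye])⟩
      obtain ⟨G', hG', hG'c, hxG'⟩ :=
        exists_mem_face_card_eq (hasDim_link_singleton hK hG hGc hyG) (hL.link_singleton y) hx
      obtain ⟨hyG', hG'⟩ := mem_link_singleton.1 hG'
      exact ⟨insert y G', hG', by rw [Finset.card_insert_of_notMem hyG', hG'c],
        Finset.mem_insert_of_mem hxG'⟩
    have hconn := hL.connected (by omega) (K.down_closed hu (Finset.empty_subset _))
    have hpath := hconn u g hu (K.down_closed hG₀ (Finset.singleton_subset_iff.2 hg))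
    clear hu
    induction hpath using Relation.ReflTransGen.head_induction_on with
    | refl => exact ⟨G₀, hG₀, hG₀c, hg⟩
    | head hadj _ ih => exact spread _ _ hadj ih

theorem card_eq_of_isFacet :
    ∀ {d : ℕ} {K : ASC V}, K.hasDim ((d : ℤ) - 1) → K.LinksConnected d →
      ∀ {s : Finset V}, K.IsFacet s → s.card = d
  | 0, K, hK, _, s, hs => by
    simpa using (hasDim_sub_one_iff.1 hK).2 _ hs.1
  | d + 1, K, hK, hL, s, hs => by
    obtain ⟨G₀, hG₀, hG₀c⟩ := (hasDim_sub_one_iff.1 hK).1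
    obtain ⟨v, hv⟩ : s.Nonempty := by
      rw [Finset.nonempty_iff_ne_empty]
      rintro rfl
      simp [← hs.2 G₀ hG₀ (Finset.empty_subset _)] at hG₀c
    obtain ⟨G, hG, hGc, hvG⟩ :=
      exists_mem_face_card_eq hK hL (K.down_closed hs.1 (Finset.singleton_subset_iff.2 hv))
    have := card_eq_of_isFacet (hasDim_link_singleton hK hG hGc hvG) (hL.link_singleton v)
      (hs.link_singleton_erase hv)
    rw [Finset.card_erase_of_mem hv] at this
    have := Finset.card_pos.2 ⟨v, hv⟩
    omega

end DecidableEq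

end ASC

section Homology

variable {V : Type}

def FacesDim.vertex {L : ASC V} {u : V} (hu : {u} ∈ L.faces) : FacesDim L 0 :=
  ⟨{u}, hu, Finset.card_singleton u⟩

open Classical in
def reachIndicator (L : ASC V) (u : V) : SimpChain k L 0 →ₗ[k] k :=
  Finsupp.linearCombination k fun s =>
    if ∃ a ∈ s.1, Relation.ReflTransGen L.Adj u a then 1 else 0

open Classical in
lemma reachIndicator_vertex (L : ASC V) {u v : V} (hv : {v} ∈ L.faces) :
    reachIndicator k L u (Finsupp.single (FacesDim.vertex hv) 1) =
      if Relation.ReflTransGen L.Adj u v then 1 else 0 := by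
  rw [reachIndicator, Finsupp.linearCombination_single, one_smul]
  exact if_congr (by simp [FacesDim.vertex]) rfl rfl

lemma simpAugment_vertex (L : ASC V) {u : V} (hu : {u} ∈ L.faces) :
    simpAugment k L (Finsupp.single (FacesDim.vertex hu) 1) = 1 :=
  Finsupp.lsum_single _ _ _ _

variable [LinearOrder V]

lemma simpRedCycles_le_range_of_subsingleton {L : ASC V} {n : ℕ}
    (h : Subsingleton (SimpRedHomology k L n)) :
    simpRedCycles k L n ≤ LinearMap.range (simpBoundary k L n) := by
  have : Subsingleton
      ↥((simpRedCycles k L n).map (LinearMap.range (simpBoundary k L n)).mkQ) := h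
  simpa using LinearMap.le_ker_iff_map.2 (Submodule.eq_bot_of_subsingleton
    (p := (simpRedCycles k L n).map (LinearMap.range (simpBoundary k L n)).mkQ))

lemma reachIndicator_simpBoundary (L : ASC V) (u : V) (c : SimpChain k L (0 + 1)) :
    reachIndicator k L u (simpBoundary k L 0 c) = 0 := by
  induction c using Finsupp.induction_linear with
  | zero => simp
  | add c c' hc hc' => rw [map_add, map_add, hc, hc', add_zero]
  | single e b =>
    -- Removing either endpoint of an edge leaves the other one, which is adjacent to it.
    have erase_reach : ∀ w ∈ e.1, (∃ a ∈ e.1.erase w, Relation.ReflTransGen L.Adj u a) ↔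
        ∃ a ∈ e.1, Relation.ReflTransGen L.Adj u a := by
      refine fun w hw => ⟨fun ⟨a, ha, hua⟩ => ⟨a, Finset.mem_of_mem_erase ha, hua⟩, ?_⟩
      rintro ⟨a, ha, hua⟩
      obtain ⟨x, hx⟩ := Finset.card_eq_one.1 (by rw [Finset.card_erase_of_mem hw, e.2.2] :
        (e.1.erase w).card = 1)
      have hxe : x ∈ e.1.erase w := hx ▸ Finset.mem_singleton_self x
      exact ⟨x, hxe, hua.tail ⟨e.1, e.2.1, ha, Finset.mem_of_mem_erase hxe⟩⟩
    simp only [simpBoundary, Finsupp.lsum_single, LinearMap.coe_sum, Finset.sum_apply,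
      LinearMap.smul_apply, map_sum, map_smul]
    rw [Fin.sum_univ_two]
    erw [Finsupp.lsingle_apply, Finsupp.lsingle_apply, reachIndicator,
      Finsupp.linearCombination_single, Finsupp.linearCombination_single]
    have h0 := erase_reach _ (faceVertex_mem e.1 e.2.2 0)
    have h1 := erase_reach _ (faceVertex_mem e.1 e.2.2 1)
    split_ifs with H0 H1 H1
    · simp
    · exact absurd (h1.2 (h0.1 H0)) H1
    · exact absurd (h0.2 (h1.1 H1)) H0
    · simp

lemma connected_of_subsingleton_simpRedHomology_zero {L : ASC V}
    (h : Subsingleton (SimpRedHomology k L 0)) : L.Connected := by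
  intro u v hu hv
  by_contra huv
  let z : SimpChain k L 0 :=
    Finsupp.single (FacesDim.vertex hu) 1 - Finsupp.single (FacesDim.vertex hv) 1
  have hz : z ∈ simpRedCycles k L 0 := by
    simp only [z, simpRedCycles, LinearMap.mem_ker, map_sub, simpAugment_vertex, sub_self]
  obtain ⟨c, hc⟩ := simpRedCycles_le_range_of_subsingleton k h hz
  have hz_one : reachIndicator k L u z = 1 := by
    simp [z, reachIndicator_vertex, huv, Relation.ReflTransGen.refl]
  rw [← hc, reachIndicator_simpBoundary] at hz_one
  exact zero_ne_one hz_one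

end Homology

lemma IsSerre.linksConnected {V : Type} [LinearOrder V] {K : ASC V} {d r : ℕ}
    (hS : IsSerre k K d r) (hr : 2 ≤ r) : K.LinksConnected d := fun σ hσ hcard =>
  connected_of_subsingleton_simpRedHomology_zero k (hS σ hσ 0 (by simp only [dimF]; omega))

theorem serre_stmt_7 (k : Type) [Field k] (N : ℕ) (K : ASC (Fin N)) (d r : ℕ)
    (hd : K.hasDim ((d : ℤ) - 1)) (hr : 2 ≤ r) (hS : IsSerre k K d r) :
    ∀ s : Finset (Fin N), K.IsFacet s → dimF s = (d : ℤ) - 1 := fun _ hs =>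
  ASC.dimF_eq_sub_one_iff.2 (ASC.card_eq_of_isFacet hd (hS.linksConnected k hr) hs)

end
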